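/- Let f be differentiable and (γ, μ)-strongly-quasar-convex with respect to a global minimizer x* (f need not be smooth), and suppose the stochastic gradients satisfy E[‖g_t‖² | x₀, g₀, …, g_{t−1}] ≤ G². Running SGD with step sizes α_t = 2/(γμt) at iteration t yields, for every t ≥ 1, E‖x_t − x*‖² ≤ 4G²/(γ²μ²t). -/

import Mathlib

/-!
Strong quasar-convexity at `y`, combined with `f x* ≤ f y`, gives the one-point monotonicity
`⟪y - x*, ∇f y⟫ ≥ (γμ/2) ‖y - x*‖²`. Expanding the square of an SGD step
`x_{t+1} = x_t - α g_t` and conditioning on `g_0, …, g_{t-1}` (which determine `x_t`), the cross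
term has expectation `E⟪x_t - x*, ∇f x_t⟫`, so `D_t = E‖x_t - x*‖²` satisfies
`D_{t+1} ≤ (1 - αγμ) D_t + α² G²`. For `α = 2/(γμ(t+1))` this is
`D_{t+1} ≤ (1 - 2/(t+1)) D_t + C/(t+1)²` with `C = 4G²/(γμ)²`, and induction gives `D_t ≤ C/t`.
-/

open MeasureTheory
open scoped RealInnerProductSpace

theorem mul_norm_sub_sq_le_inner_of_stronglyQuasarConvex {E : Type*} [NormedAddCommGroup E]
    [InnerProductSpace ℝ E] {f : E → ℝ} {f' : E → E} {xstar y : E} {γ μ : ℝ} (hγ : 0 < γ)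
    (hmin : f xstar ≤ f y)
    (hsqc : f xstar ≥ f y + (1/γ) * ⟪f' y, xstar - y⟫ + (μ/2) * ‖y - xstar‖^2) :
    γ * μ / 2 * ‖y - xstar‖^2 ≤ ⟪y - xstar, f' y⟫ := by
  have hflip : ⟪f' y, xstar - y⟫ = -⟪y - xstar, f' y⟫ := by
    rw [real_inner_comm, ← neg_sub y xstar, inner_neg_left]
  rw [hflip] at hsqc
  have h : μ / 2 * ‖y - xstar‖^2 ≤ (1/γ) * ⟪y - xstar, f' y⟫ := by linarith
  calc γ * μ / 2 * ‖y - xstar‖^2 = γ * (μ / 2 * ‖y - xstar‖^2) := by ring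
    _ ≤ γ * ((1/γ) * ⟪y - xstar, f' y⟫) := mul_le_mul_of_nonneg_left h hγ.le
    _ = ⟪y - xstar, f' y⟫ := by field_simp

theorem norm_sub_smul_sub_sq {E : Type*} [NormedAddCommGroup E] [InnerProductSpace ℝ E]
    (x g z : E) (α : ℝ) :
    ‖x - α • g - z‖^2 = ‖x - z‖^2 - 2 * α * ⟪x - z, g⟫ + α^2 * ‖g‖^2 := by
  rw [sub_right_comm, norm_sub_sq_real, real_inner_smul_right, norm_smul, Real.norm_eq_abs,
    mul_pow, sq_abs]
  ring

theorem le_div_natCast_of_recursion {D : ℕ → ℝ} {C : ℝ} (hC : 0 ≤ C) (hD0 : 0 ≤ D 0)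
    (hrec : ∀ t : ℕ, D (t+1) ≤ (1 - 2/((t:ℝ)+1)) * D t + C/((t:ℝ)+1)^2) :
    ∀ t : ℕ, 1 ≤ t → D t ≤ C / t := by
  intro t ht
  induction t, ht using Nat.le_induction with
  | base =>
    -- the coefficient `1 - 2/1 = -1` makes `D 0 ≥ 0` enough
    have h := hrec 0
    norm_num at h ⊢
    linarith
  | succ t ht ih =>
    have hT : (1:ℝ) ≤ t := by exact_mod_cast ht
    have hcoef : 0 ≤ 1 - 2/((t:ℝ)+1) := by
      rw [sub_nonneg, div_le_one (by linarith)]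
      linarith
    have hgap : C/((t:ℝ)+1) - ((1 - 2/((t:ℝ)+1)) * (C/t) + C/((t:ℝ)+1)^2)
        = C/(t*((t:ℝ)+1)^2) := by
      field_simp
      ring
    have hgap_nonneg : 0 ≤ C/(t*((t:ℝ)+1)^2) := by positivity
    have hcontract := mul_le_mul_of_nonneg_left ih hcoef
    push_cast
    linarith [hrec t]

section Conditioning

variable {Ω E : Type*} {m m0 : MeasurableSpace Ω} {μ : Measure Ω}

theorem integral_le_of_ae_condExp_le [IsProbabilityMeasure μ] (hm : m ≤ m0) {f : Ω → ℝ} {c : ℝ}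
    (hf : ∀ᵐ ω ∂μ, μ[f|m] ω ≤ c) : ∫ ω, f ω ∂μ ≤ c := by
  calc ∫ ω, f ω ∂μ = ∫ ω, μ[f|m] ω ∂μ := (integral_condExp hm).symm
    _ ≤ ∫ _, c ∂μ := integral_mono_ae integrable_condExp (integrable_const c) hf
    _ = c := by simp

variable [NormedAddCommGroup E] [InnerProductSpace ℝ E] [CompleteSpace E]

theorem integral_inner_eq_of_condExp_eq (hm : m ≤ m0) [SigmaFinite (μ.trim hm)]
    {h v u : Ω → E} (hh : StronglyMeasurable[m] h)
    (hhv : Integrable (fun ω => ⟪h ω, v ω⟫) μ) (hv : Integrable v μ) (hvu : μ[v|m] =ᵐ[μ] u) :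
    Integrable (fun ω => ⟪h ω, u ω⟫) μ ∧ ∫ ω, ⟪h ω, v ω⟫ ∂μ = ∫ ω, ⟪h ω, u ω⟫ ∂μ := by
  have hpull : μ[fun ω => ⟪h ω, v ω⟫|m] =ᵐ[μ] fun ω => ⟪h ω, u ω⟫ := by
    refine (condExp_bilin_of_stronglyMeasurable_left (innerSL ℝ) hh hhv hv).trans ?_
    filter_upwards [hvu] with ω hω
    rw [hω]; rfl
  exact ⟨integrable_condExp.congr hpull,
    (integral_condExp hm).symm.trans (integral_congr_ae hpull)⟩

end Conditioning

section SGD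

variable {Ω E : Type*} {m m0 : MeasurableSpace Ω} {μ : Measure Ω} [MeasurableSpace E]

abbrev sigmaBefore (g : ℕ → Ω → E) (t : ℕ) : MeasurableSpace Ω :=
  ⨆ i ∈ Finset.range t, MeasurableSpace.comap (g i) inferInstance

theorem sigmaBefore_le {g : ℕ → Ω → E} (hg : ∀ i, Measurable (g i)) (t : ℕ) :
    sigmaBefore g t ≤ m0 :=
  iSup₂_le fun i _ => (hg i).comap_le

theorem sigmaBefore_mono (g : ℕ → Ω → E) : Monotone (sigmaBefore g) :=
  fun _ _ hst => biSup_mono fun _ hi => Finset.range_mono hst hi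

theorem measurable_sigmaBefore_succ (g : ℕ → Ω → E) (t : ℕ) :
    Measurable[sigmaBefore g (t+1)] (g t) :=
  measurable_iff_comap_le.2 <| le_iSup₂_of_le t (Finset.self_mem_range_succ t) le_rfl

theorem measurable_sgd_iterate [NormedAddCommGroup E] [NormedSpace ℝ E] [BorelSpace E]
    [SecondCountableTopology E]
    {x g : ℕ → Ω → E} {x₀ : E} {α : ℕ → ℝ}
    (hx0 : x 0 = fun _ => x₀) (hstep : ∀ t, x (t+1) = fun ω => x t ω - α t • g t ω) :
    ∀ t, Measurable[sigmaBefore g t] (x t)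
  | 0 => hx0 ▸ measurable_const
  | t + 1 => hstep t ▸
      ((measurable_sgd_iterate hx0 hstep t).mono (sigmaBefore_mono g t.le_succ) le_rfl).sub
        ((measurable_sigmaBefore_succ g t).const_smul (α t))

variable [NormedAddCommGroup E] [InnerProductSpace ℝ E]

theorem integral_norm_sub_smul_sub_sq_le [CompleteSpace E] [BorelSpace E]
    [SecondCountableTopology E] [IsFiniteMeasure μ]
    (hm : m ≤ m0) {f' : E → E} {xstar : E} {c α G : ℝ} {x g : Ω → E}
    (hα : 0 ≤ α) (hsecant : ∀ y, c * ‖y - xstar‖^2 ≤ ⟪y - xstar, f' y⟫)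
    (hx : Measurable[m] x) (hg : Integrable g μ) (hg2 : Integrable (fun ω => ‖g ω‖^2) μ)
    (hx2 : Integrable (fun ω => ‖x ω - xstar‖^2) μ) (hunb : μ[g|m] =ᵐ[μ] fun ω => f' (x ω))
    (hG : ∫ ω, ‖g ω‖^2 ∂μ ≤ G^2) :
    ∫ ω, ‖x ω - α • g ω - xstar‖^2 ∂μ
      ≤ (1 - 2 * α * c) * ∫ ω, ‖x ω - xstar‖^2 ∂μ + α^2 * G^2 := by
  have hxm : StronglyMeasurable[m] (fun ω => x ω - xstar) :=
    (hx.sub_const xstar).stronglyMeasurable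
  have hxL2 : MemLp (fun ω => x ω - xstar) 2 μ :=
    (memLp_two_iff_integrable_sq_norm (hxm.mono hm).aestronglyMeasurable).2 hx2
  have hgL2 : MemLp g 2 μ := (memLp_two_iff_integrable_sq_norm hg.1).2 hg2
  have hinner : Integrable (fun ω => ⟪x ω - xstar, g ω⟫) μ :=
    memLp_one_iff_integrable.1 ((innerSL ℝ).memLp_of_bilin 1 hxL2 hgL2)
  obtain ⟨hinner', hcross⟩ := integral_inner_eq_of_condExp_eq hm hxm hinner hg hunb
  have hlower : c * ∫ ω, ‖x ω - xstar‖^2 ∂μ ≤ ∫ ω, ⟪x ω - xstar, g ω⟫ ∂μ := by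
    rw [hcross, ← integral_const_mul]
    exact integral_mono (hx2.const_mul c) hinner' fun ω => hsecant (x ω)
  have hexpand : ∫ ω, ‖x ω - α • g ω - xstar‖^2 ∂μ = ∫ ω, ‖x ω - xstar‖^2 ∂μ
      - 2 * α * ∫ ω, ⟪x ω - xstar, g ω⟫ ∂μ + α^2 * ∫ ω, ‖g ω‖^2 ∂μ := by
    have hfirst : Integrable (fun ω => ‖x ω - xstar‖^2 - 2 * α * ⟪x ω - xstar, g ω⟫) μ :=
      hx2.sub (hinner.const_mul _)
    simp_rw [norm_sub_smul_sub_sq]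
    rw [integral_add hfirst (hg2.const_mul _),
      integral_sub hx2 (hinner.const_mul _), integral_const_mul, integral_const_mul]
  rw [hexpand]
  linarith [mul_le_mul_of_nonneg_left hlower (by positivity : (0:ℝ) ≤ 2 * α),
    mul_le_mul_of_nonneg_left hG (sq_nonneg α)]

end SGD

theorem sgd_strongly_quasar_nonsmooth_distance_general
    {Ω : Type*} [MeasurableSpace Ω] (P : Measure Ω) [IsProbabilityMeasure P]
    {n : ℕ} (f : EuclideanSpace ℝ (Fin n) → ℝ)
    (f' : EuclideanSpace ℝ (Fin n) → EuclideanSpace ℝ (Fin n))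
    (xstar x₀ : EuclideanSpace ℝ (Fin n))
    (γ μ G : ℝ)
    (x g : ℕ → Ω → EuclideanSpace ℝ (Fin n))
    (hmin : ∀ y, f xstar ≤ f y)
    (hγ0 : 0 < γ) (hμ : 0 < μ)
    (hsqc : ∀ y, f xstar ≥ f y + (1/γ) * ⟪f' y, xstar - y⟫ + (μ/2) * ‖y - xstar‖^2)
    (hx0 : x 0 = fun _ => x₀)
    (hstep : ∀ t : ℕ, x (t+1) = fun ω => x t ω - (2/(γ*μ*((t : ℝ)+1))) • g t ω)
    (hgmeas : ∀ t, Measurable (g t))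
    (hgint : ∀ t, Integrable (g t) P)
    (hgsqint : ∀ t, Integrable (fun ω => ‖g t ω‖^2) P)
    (hunbiased : ∀ t,
      MeasureTheory.condExp
          (⨆ i ∈ Finset.range t, MeasurableSpace.comap (g i) inferInstance) P (g t)
        =ᵐ[P] fun ω => f' (x t ω))
    (hmoment : ∀ t, ∀ᵐ ω ∂P,
      MeasureTheory.condExp
          (⨆ i ∈ Finset.range t, MeasurableSpace.comap (g i) inferInstance) P
          (fun ω' => ‖g t ω'‖^2) ω ≤ G^2)
    (hsqint : ∀ t, Integrable (fun ω => ‖x t ω - xstar‖^2) P)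
:    ∀ t : ℕ, 1 ≤ t → ∫ ω, ‖x t ω - xstar‖^2 ∂P ≤ 4*G^2/(γ^2*μ^2*(t : ℝ)) := by
  have hsecant : ∀ y, γ * μ / 2 * ‖y - xstar‖^2 ≤ ⟪y - xstar, f' y⟫ := fun y =>
    mul_norm_sub_sq_le_inner_of_stronglyQuasarConvex hγ0 (hmin y) (hsqc y)
  have hrec : ∀ t : ℕ, ∫ ω, ‖x (t+1) ω - xstar‖^2 ∂P ≤ (1 - 2/((t:ℝ)+1))
      * ∫ ω, ‖x t ω - xstar‖^2 ∂P + 4*G^2/(γ^2*μ^2)/((t:ℝ)+1)^2 := by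
    intro t
    have hle := sigmaBefore_le hgmeas t
    have hstep_le := integral_norm_sub_smul_sub_sq_le hle (α := 2/(γ*μ*((t:ℝ)+1)))
      (by positivity) hsecant (measurable_sgd_iterate hx0 hstep t) (hgint t) (hgsqint t)
      (hsqint t) (hunbiased t) (integral_le_of_ae_condExp_le hle (hmoment t))
    have hcoef : 1 - 2 * (2/(γ*μ*((t:ℝ)+1))) * (γ * μ / 2) = 1 - 2/((t:ℝ)+1) := by
      field_simp
    have hnoise : (2/(γ*μ*((t:ℝ)+1)))^2 * G^2 = 4*G^2/(γ^2*μ^2)/((t:ℝ)+1)^2 := by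
      field_simp
      ring
    rw [hstep t, ← hcoef, ← hnoise]
    exact hstep_le
  intro t ht
  rw [← div_div]
  have hC : 0 ≤ 4*G^2/(γ^2*μ^2) := by positivity
  exact le_div_natCast_of_recursion (D := fun t => ∫ ω, ‖x t ω - xstar‖^2 ∂P) hC
    (integral_nonneg fun _ => by positivity) hrec t ht

theorem sgd_strongly_quasar_nonsmooth_distance
    {Ω : Type*} [MeasurableSpace Ω] (P : Measure Ω) [IsProbabilityMeasure P]
    {n : ℕ} (f : EuclideanSpace ℝ (Fin n) → ℝ)
    (f' : EuclideanSpace ℝ (Fin n) → EuclideanSpace ℝ (Fin n))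
    (xstar x₀ : EuclideanSpace ℝ (Fin n))
    (γ μ G : ℝ)
    (x g : ℕ → Ω → EuclideanSpace ℝ (Fin n))
    (hgrad : ∀ y, HasGradientAt f (f' y) y)
    (hmin : ∀ y, f xstar ≤ f y)
    (hγ0 : 0 < γ) (hγ1 : γ ≤ 1) (hμ : 0 < μ)
    (hsqc : ∀ y, f xstar ≥ f y + (1/γ) * ⟪f' y, xstar - y⟫ + (μ/2) * ‖y - xstar‖^2)
    (hx0 : x 0 = fun _ => x₀)
    (hstep : ∀ t : ℕ, x (t+1) = fun ω => x t ω - (2/(γ*μ*((t : ℝ)+1))) • g t ω)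
    (hgmeas : ∀ t, Measurable (g t))
    (hgint : ∀ t, Integrable (g t) P)
    (hgsqint : ∀ t, Integrable (fun ω => ‖g t ω‖^2) P)
    (hunbiased : ∀ t,
      MeasureTheory.condExp
          (⨆ i ∈ Finset.range t, MeasurableSpace.comap (g i) inferInstance) P (g t)
        =ᵐ[P] fun ω => f' (x t ω))
    (hmoment : ∀ t, ∀ᵐ ω ∂P,
      MeasureTheory.condExp
          (⨆ i ∈ Finset.range t, MeasurableSpace.comap (g i) inferInstance) P
          (fun ω' => ‖g t ω'‖^2) ω ≤ G^2)
    (hsqint : ∀ t, Integrable (fun ω => ‖x t ω - xstar‖^2) P)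
:    ∀ t : ℕ, 1 ≤ t → ∫ ω, ‖x t ω - xstar‖^2 ∂P ≤ 4*G^2/(γ^2*μ^2*(t : ℝ)) :=
  sgd_strongly_quasar_nonsmooth_distance_general P f f' xstar x₀ γ μ G x g hmin hγ0 hμ hsqc hx0
    hstep hgmeas hgint hgsqint hunbiased hmoment hsqint
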